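/- For a connected cubic plane graph Γ, if any one of its state-graph surfaces (obtained from the ribbon-graph structure of Γ by introducing half-twists on an arbitrary subset of the edge-ribbons and capping boundary circles with disks) admits a proper 4-face-coloring, then Γ itself admits a proper 4-face-coloring. -/

import Mathlib

/-!
A combinatorial map (rotation system): darts `D`, vertex rotation `σ`,
edge involution `α` (fixed-point free).  Vertices are the cycles of `σ`,
edges the cycles of `α`, and faces the cycles of `φ = σ * α`.
Planarity of a connected map is expressed by Euler's formula `V + F = E + 2`.
-/

structure CombMap where
  D : Type
  [fin : Fintype D]
  [deq : DecidableEq D]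
  σ : Equiv.Perm D
  α : Equiv.Perm D
  α_invol : ∀ d, α (α d) = d
  α_fpf : ∀ d, α d ≠ d

attribute [instance] CombMap.fin CombMap.deq

namespace CombMap

variable (M : CombMap)

/-- The face permutation. -/
def φ : Equiv.Perm M.D := M.σ * M.α

/-- Every vertex is trivalent. -/
def Cubic : Prop := (∀ d, M.σ (M.σ (M.σ d)) = d) ∧ ∀ d, M.σ d ≠ d

/-- The map is connected. -/
def Connected : Prop :=
  ∀ d e : M.D, Relation.ReflTransGen (fun x y => M.σ x = y ∨ M.α x = y) d e

def sameCycleSetoid (f : Equiv.Perm M.D) : Setoid M.D where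
  r := f.SameCycle
  iseqv := ⟨fun x => Equiv.Perm.SameCycle.refl f x, fun h => h.symm, fun h h' => h.trans h'⟩

/-- The number of cycles (orbits) of a permutation of the darts. -/
noncomputable def numCycles (f : Equiv.Perm M.D) : ℕ := Nat.card (Quotient (M.sameCycleSetoid f))

/-- A connected map is planar iff Euler's formula `V - E + F = 2` holds. -/
def Planar : Prop :=
  M.Connected ∧ M.numCycles M.σ + M.numCycles M.φ = M.numCycles M.α + 2

/-- No edge has the same face on both of its sides (for a plane graph this
is equivalent to having no bridge). -/
def Bridgeless : Prop := ∀ d, ¬ M.φ.SameCycle d (M.α d)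

/-- A proper `n`-face-coloring, encoded as a function on darts that is
constant on faces and assigns different colors to the two sides of each edge. -/
def FaceColoring (n : ℕ) (c : M.D → Fin n) : Prop :=
  (∀ d, c (M.φ d) = c d) ∧ ∀ d, c d ≠ c (M.α d)

/-- A proper `n`-edge-coloring, encoded as a function on darts that is
constant on edges and assigns different colors to distinct edges at a vertex. -/
def EdgeColoring (n : ℕ) (c : M.D → Fin n) : Prop :=
  (∀ d, c (M.α d) = c d) ∧ ∀ d, c d ≠ c (M.σ d)

end CombMap


namespace CombMap
variable (M : CombMap)

/-!
State graphs.  For a twist assignment `t` on the edges (a half-twisted band where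
`t = true`), the faces of the resulting state-graph surface are the boundary
circles of the twisted ribbon graph.  We traverse these circles through the
boundary *segments* `M.D × Bool` (the two band-side pieces at each dart): `nextSeg`
moves along a circle across an edge band and around a vertex disk, and `sideMate`
identifies the two halves of one and the same band side.
-/

/-- One step along a boundary circle of the twisted ribbon graph. -/
def nextSeg (t : M.D → Bool) (x : M.D × Bool) : M.D × Bool :=
  if Bool.xor x.2 (!(t x.1)) then (M.σ (M.α x.1), false) else (M.σ⁻¹ (M.α x.1), true)

/-- The other half of the same band side. -/
def sideMate (t : M.D → Bool) (x : M.D × Bool) : M.D × Bool :=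
  (M.α x.1, Bool.xor x.2 (!(t x.1)))

/-- A proper `n`-face-coloring of the state graph `Γ_t`: a coloring of the boundary
circles (encoded on segments, constant along each circle) such that the two faces
adjacent along any edge of the graph receive different colors. -/
def IsStateColoring (t : M.D → Bool) (n : ℕ) (c : M.D × Bool → Fin n) : Prop :=
  (∀ x, c (M.nextSeg t x) = c x) ∧ (∀ x, c (M.sideMate t x) = c x) ∧
  ∀ d : M.D, c (d, false) ≠ c (d, true)

end CombMap

/-!
Identify the four colours with the Klein group `ZMod 2 × ZMod 2`. At each edge of `Γ`, add the
colours of the two state-graph faces meeting along it. A half-twist only swaps these two faces,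
so the sum is well defined on edges; it is nonzero because the colouring is proper; and the three
sums at a vertex cancel, since each face corner at the vertex borders two of its three edges.
This is a nowhere-zero `(ZMod 2)²`-flow on `Γ`.

On a connected plane cubic graph every mod-2 cycle bounds a set of faces: the face boundaries
are a subspace of the cycle space of dimension at least `F - 1`, the cycle space has dimension at
most `E - V + 1`, and Euler's formula makes the two bounds equal. Writing both coordinates of the
flow as face boundaries gives a face function `g` into the Klein group with `g f ≠ g f'` for the
two faces `f, f'` at any edge: a 4-face-colouring of `Γ`.
-/

open Module

namespace Equiv.Perm

variable {α : Type*} {K : Type*} [Field K]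

variable (K) in
def invariantFuns (f : Perm α) : Submodule K (α → K) where
  carrier := {w | ∀ x, w (f x) = w x}
  add_mem' ha hb x := by simp [ha x, hb x]
  zero_mem' _ := rfl
  smul_mem' c w hw x := by simp [hw x]

theorem SameCycle.apply_eq_of_mem_invariantFuns [Finite α] {f : Perm α} {w : α → K}
    (hw : w ∈ f.invariantFuns K) {x y : α} (h : f.SameCycle x y) : w x = w y := by
  obtain ⟨n, rfl⟩ := h.exists_nat_pow_eq
  clear h
  induction n with
  | zero => rfl
  | succ n ih => rw [pow_succ', mul_apply, hw]; exact ih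

theorem finrank_invariantFuns [Finite α] (f : Perm α) :
    finrank K (f.invariantFuns K) = Nat.card (Quotient (SameCycle.setoid f)) := by
  classical
  have := Fintype.ofFinite α
  let e : f.invariantFuns K ≃ₗ[K] (Quotient (SameCycle.setoid f) → K) :=
    { toFun w := Quotient.lift w.1 fun _ _ => SameCycle.apply_eq_of_mem_invariantFuns w.2
      map_add' _ _ := funext fun q => q.inductionOn fun _ => rfl
      map_smul' _ _ := funext fun q => q.inductionOn fun _ => rfl
      invFun u := ⟨fun x => u ⟦x⟧, fun x => congrArg u <| Quotient.sound <|
        sameCycle_apply_left.2 (SameCycle.refl f x)⟩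
      left_inv _ := rfl
      right_inv u := funext fun q => q.inductionOn fun _ => rfl }
  rw [e.finrank_eq, finrank_fintype_fun_eq_card, Nat.card_eq_fintype_card]

end Equiv.Perm

theorem Submodule.finrank_map_add_finrank_inf_ker {K V W : Type*} [Field K] [AddCommGroup V]
    [Module K V] [AddCommGroup W] [Module K W] [FiniteDimensional K V] (p : Submodule K V)
    (f : V →ₗ[K] W) : finrank K (p.map f) + finrank K ↥(p ⊓ LinearMap.ker f) = finrank K p := by
  have := LinearMap.finrank_range_add_finrank_ker (f.domRestrict p)
  rwa [LinearMap.range_domRestrict, LinearMap.ker_domRestrict, ← finrank_map_subtype_eq,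
    map_comap_subtype] at this

theorem CharTwo.add_add_add_cyclic_eq_zero {R : Type*} [Ring R] [CharP R 2] (a b c : R) :
    a + b + (b + c) + (c + a) = 0 := by
  rw [show a + b + (b + c) + (c + a) = a + a + (b + b) + (c + c) by abel]
  simp only [CharTwo.add_self_eq_zero]

theorem finrank_span_singleton_le_one {K V : Type*} [Field K] [AddCommGroup V] [Module K V]
    (v : V) : finrank K (K ∙ v) ≤ 1 := by
  simpa using finrank_span_le_card ({v} : Set V)

namespace CombMap

variable {M : CombMap}

theorem α_eq_iff {a b : M.D} : M.α a = b ↔ a = M.α b :=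
  ⟨fun h => h ▸ (M.α_invol a).symm, fun h => h ▸ M.α_invol b⟩

theorem φ_apply_α (d : M.D) : M.φ (M.α d) = M.σ d := by
  simp [φ, M.α_invol]

theorem finrank_invariantFuns_eq_numCycles (f : Equiv.Perm M.D) :
    finrank (ZMod 2) (f.invariantFuns (ZMod 2)) = M.numCycles f :=
  f.finrank_invariantFuns

theorem Connected.apply_eq {β : Type*} (hM : M.Connected) {u : M.D → β}
    (hσ : ∀ d, u (M.σ d) = u d) (hα : ∀ d, u (M.α d) = u d) (a b : M.D) : u a = u b := by
  induction hM a b with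
  | refl => rfl
  | tail _ hstep ih => rcases hstep with rfl | rfl <;> simp [hσ, hα, ih]

theorem Planar.nonempty (h : M.Planar) : Nonempty M.D := by
  by_contra hD
  rw [not_nonempty_iff] at hD
  simpa [numCycles] using h.2

/-! Functions on darts invariant under `σ`, `α` and `φ` stand for mod-2 chains on the vertices,
edges and faces of `M`; `edgeSum` restricted to face functions is the face boundary map and
`vertexSum` restricted to edge functions the edge boundary map. -/

variable (M) in
def edgeSum : (M.D → ZMod 2) →ₗ[ZMod 2] M.D → ZMod 2 :=
  LinearMap.id + LinearMap.funLeft (ZMod 2) (ZMod 2) M.α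

variable (M) in
def vertexSum : (M.D → ZMod 2) →ₗ[ZMod 2] M.D → ZMod 2 :=
  LinearMap.id + LinearMap.funLeft (ZMod 2) (ZMod 2) M.σ +
    LinearMap.funLeft (ZMod 2) (ZMod 2) fun d => M.σ (M.σ d)

@[simp]
theorem edgeSum_apply (u : M.D → ZMod 2) (d : M.D) : M.edgeSum u d = u d + u (M.α d) :=
  rfl

@[simp]
theorem vertexSum_apply (u : M.D → ZMod 2) (d : M.D) :
    M.vertexSum u d = u d + u (M.σ d) + u (M.σ (M.σ d)) :=
  rfl

variable (M) in
def cycles : Submodule (ZMod 2) (M.D → ZMod 2) :=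
  M.α.invariantFuns (ZMod 2) ⊓ LinearMap.ker M.vertexSum

variable (M) in
def faceBoundaries : Submodule (ZMod 2) (M.D → ZMod 2) :=
  (M.φ.invariantFuns (ZMod 2)).map M.edgeSum

theorem faceBoundaries_le_cycles (hcub : M.Cubic) : M.faceBoundaries ≤ M.cycles := by
  rintro _ ⟨u, hu, rfl⟩
  have hσα : ∀ d, u (M.α d) = u (M.σ d) := fun d => by rw [← φ_apply_α, hu]
  refine ⟨fun d => by simp [M.α_invol, add_comm], LinearMap.mem_ker.2 (funext fun d => ?_)⟩
  simp only [vertexSum_apply, edgeSum_apply, hσα, hcub.1, Pi.zero_apply]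
  exact CharTwo.add_add_add_cyclic_eq_zero ..

theorem finrank_faceFuns_inf_ker_edgeSum_le_one (hM : M.Connected) [Nonempty M.D] :
    finrank (ZMod 2) ↥(M.φ.invariantFuns (ZMod 2) ⊓ LinearMap.ker M.edgeSum) ≤ 1 := by
  obtain ⟨d₀⟩ := ‹Nonempty M.D›
  have hconst : M.φ.invariantFuns (ZMod 2) ⊓ LinearMap.ker M.edgeSum ≤ ZMod 2 ∙ 1 := by
    rintro u ⟨hφ, hδ⟩
    have hα : ∀ d, u (M.α d) = u d := fun d => (CharTwo.add_eq_zero.1 (congrFun hδ d)).symm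
    have hσ : ∀ d, u (M.σ d) = u d := fun d => by rw [← φ_apply_α, hφ, hα]
    exact Submodule.mem_span_singleton.2 ⟨u d₀, funext fun d => by simp [hM.apply_eq hσ hα d d₀]⟩
  calc finrank (ZMod 2) ↥(M.φ.invariantFuns (ZMod 2) ⊓ LinearMap.ker M.edgeSum)
      ≤ finrank (ZMod 2) ↥(ZMod 2 ∙ (1 : M.D → ZMod 2)) := Submodule.finrank_mono hconst
    _ ≤ 1 := finrank_span_singleton_le_one 1

theorem vertexSum_eq_self {u : M.D → ZMod 2} (hu : u ∈ M.σ.invariantFuns (ZMod 2)) :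
    M.vertexSum u = u := by
  ext d
  simp only [vertexSum_apply, hu _, CharTwo.add_self_eq_zero, zero_add]

theorem vertexSum_single_σ (hcub : M.Cubic) (d : M.D) :
    M.vertexSum (Pi.single (M.σ d) 1) = M.vertexSum (Pi.single d 1) := by
  ext z
  have hz : z = M.σ d ↔ M.σ (M.σ z) = d :=
    ⟨fun h => h ▸ hcub.1 d, fun h => by rw [← h, hcub.1]⟩
  simp only [vertexSum_apply, Pi.single_apply, M.σ.apply_eq_iff_eq, hz]
  abel

theorem single_add_single_α_mem_invariantFuns (d : M.D) :
    Pi.single d 1 + Pi.single (M.α d) 1 ∈ M.α.invariantFuns (ZMod 2) := fun z => by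
  simp only [Pi.add_apply, Pi.single_apply, M.α.apply_eq_iff_eq, α_eq_iff, add_comm]

/-- `M.vertexSum (Pi.single d 1)` is the indicator of the vertex at `d`, so its translates span
the vertex functions; connectivity puts all but one of them in the image of the edge functions. -/
theorem invariantFuns_σ_le_map_vertexSum_sup (hcub : M.Cubic) (hM : M.Connected) (d₀ : M.D) :
    M.σ.invariantFuns (ZMod 2) ≤
      (M.α.invariantFuns (ZMod 2)).map M.vertexSum ⊔ ZMod 2 ∙ M.vertexSum (Pi.single d₀ 1) := by
  set S := (M.α.invariantFuns (ZMod 2)).map M.vertexSum ⊔ ZMod 2 ∙ M.vertexSum (Pi.single d₀ 1)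
  have hS : ∀ e, M.vertexSum (Pi.single e 1) ∈ S := fun e => by
    induction hM d₀ e with
    | refl => exact Submodule.mem_sup_right (Submodule.mem_span_singleton_self _)
    | @tail b _ _ hstep ih =>
      rcases hstep with rfl | rfl
      · rwa [vertexSum_single_σ hcub]
      · have hedge : M.vertexSum (Pi.single b 1) + M.vertexSum (Pi.single (M.α b) 1) ∈ S :=
          Submodule.mem_sup_left ⟨_, single_add_single_α_mem_invariantFuns b, map_add _ _ _⟩
        simpa using sub_mem hedge ih
  intro u hu
  rw [← vertexSum_eq_self hu, pi_eq_sum_univ' u, map_sum]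
  exact Submodule.sum_mem _ fun z _ => by rw [map_smul]; exact Submodule.smul_mem _ _ (hS z)

theorem Planar.faceBoundaries_eq_cycles (hcub : M.Cubic) (hplanar : M.Planar) :
    M.faceBoundaries = M.cycles := by
  obtain ⟨d₀⟩ := hplanar.nonempty
  have : Nonempty M.D := ⟨d₀⟩
  obtain ⟨hM, heuler⟩ := hplanar
  refine Submodule.eq_of_le_of_finrank_le (faceBoundaries_le_cycles hcub) ?_
  have hF := (M.φ.invariantFuns (ZMod 2)).finrank_map_add_finrank_inf_ker M.edgeSum
  have hE := (M.α.invariantFuns (ZMod 2)).finrank_map_add_finrank_inf_ker M.vertexSum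
  have hker := finrank_faceFuns_inf_ker_edgeSum_le_one hM
  have hV := (Submodule.finrank_mono (invariantFuns_σ_le_map_vertexSum_sup hcub hM d₀)).trans
    (Submodule.finrank_add_le_finrank_add_finrank _ _)
  have hspan := finrank_span_singleton_le_one (K := ZMod 2) (M.vertexSum (Pi.single d₀ 1))
  simp only [finrank_invariantFuns_eq_numCycles] at hF hE hV
  unfold faceBoundaries cycles
  omega

theorem Planar.exists_fourFaceColoring_of_flow (hcub : M.Cubic) (hplanar : M.Planar)
    (f : M.D → ZMod 2 × ZMod 2) (hα : ∀ d, f (M.α d) = f d)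
    (hv : ∀ d, f d + f (M.σ d) + f (M.σ (M.σ d)) = 0) (hf : ∀ d, f d ≠ 0) :
    ∃ c : M.D → Fin 4, M.FaceColoring 4 c := by
  have potential (π : ZMod 2 × ZMod 2 →+ ZMod 2) : (fun d => π (f d)) ∈ M.faceBoundaries := by
    rw [hplanar.faceBoundaries_eq_cycles hcub]
    exact ⟨fun d => by simp [hα],
      LinearMap.mem_ker.2 (funext fun d => by simpa using congrArg π (hv d))⟩
  obtain ⟨g₁, hg₁, hfg₁⟩ := potential (AddMonoidHom.fst _ _)
  obtain ⟨g₂, hg₂, hfg₂⟩ := potential (AddMonoidHom.snd _ _)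
  let e : Fin 4 ≃ ZMod 2 × ZMod 2 := Fintype.equivOfCardEq rfl
  refine ⟨fun d => e.symm (g₁ d, g₂ d), fun d => by simp [hg₁ d, hg₂ d], fun d hd => hf d ?_⟩
  obtain ⟨h₁, h₂⟩ : g₁ d = g₁ (M.α d) ∧ g₂ d = g₂ (M.α d) := by simpa using hd
  have hf₁ := congrFun hfg₁ d
  have hf₂ := congrFun hfg₂ d
  simp only [edgeSum_apply, ← h₁, ← h₂, CharTwo.add_self_eq_zero] at hf₁ hf₂
  exact Prod.ext hf₁.symm hf₂.symm

variable (M) in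
/-- With colours in the Klein group, the sum of the colours of the two faces along the edge
at `d`. -/
def colorFlow {n : ℕ} (e : Fin n → ZMod 2 × ZMod 2) (c : M.D × Bool → Fin n) (d : M.D) :
    ZMod 2 × ZMod 2 :=
  e (c (d, false)) + e (c (d, true))

namespace IsStateColoring

variable {t : M.D → Bool} {n : ℕ} {c : M.D × Bool → Fin n}

theorem apply_α (hc : M.IsStateColoring t n c) (d : M.D) (b : Bool) :
    c (M.α d, b ^^ !t d) = c (d, b) :=
  hc.2.1 (d, b)

theorem apply_σ (hc : M.IsStateColoring t n c) (ht : ∀ d, t (M.α d) = t d) (d : M.D) :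
    c (M.σ d, false) = c (d, true) := by
  have hnext : M.nextSeg t (M.sideMate t (d, true)) = (M.σ d, false) := by
    cases htd : t d <;> simp [nextSeg, sideMate, ht, htd, M.α_invol]
  rw [← hnext, hc.1, hc.2.1]

theorem colorFlow_α (hc : M.IsStateColoring t n c) (e : Fin n → ZMod 2 × ZMod 2) (d : M.D) :
    M.colorFlow e c (M.α d) = M.colorFlow e c d := by
  rw [colorFlow, colorFlow, ← hc.apply_α d false, ← hc.apply_α d true]
  cases t d
  · exact add_comm _ _
  · rfl

theorem colorFlow_vertex (hc : M.IsStateColoring t n c) (hcub : M.Cubic)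
    (ht : ∀ d, t (M.α d) = t d) (e : Fin n → ZMod 2 × ZMod 2) (d : M.D) :
    M.colorFlow e c d + M.colorFlow e c (M.σ d) + M.colorFlow e c (M.σ (M.σ d)) = 0 := by
  simp only [colorFlow, ← hc.apply_σ ht, hcub.1]
  exact CharTwo.add_add_add_cyclic_eq_zero ..

theorem colorFlow_ne_zero (hc : M.IsStateColoring t n c) {e : Fin n → ZMod 2 × ZMod 2}
    (he : Function.Injective e) (d : M.D) : M.colorFlow e c d ≠ 0 :=
  fun h => hc.2.2 d (he (CharTwo.add_eq_zero.1 h))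

end IsStateColoring

end CombMap

/-- If any state graph of a connected cubic plane graph `M` (obtained by inserting
half-twists in an arbitrary set of edge bands and capping the boundary circles with
disks) admits a proper 4-face-coloring, then `M` itself admits a proper
4-face-coloring. -/
theorem four_colorable_of_state_four_colorable
    (M : CombMap) (hcub : M.Cubic) (hplanar : M.Planar)
    (t : M.D → Bool) (ht : ∀ d, t (M.α d) = t d)
    (h : ∃ c : M.D × Bool → Fin 4, M.IsStateColoring t 4 c) :
    ∃ c : M.D → Fin 4, M.FaceColoring 4 c := by
  obtain ⟨c, hc⟩ := h
  let e : Fin 4 ≃ ZMod 2 × ZMod 2 := Fintype.equivOfCardEq rfl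
  exact hplanar.exists_fourFaceColoring_of_flow hcub (M.colorFlow e c) (hc.colorFlow_α e)
    (hc.colorFlow_vertex hcub ht e) (hc.colorFlow_ne_zero e.injective)
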